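/- For every λ ∈ ℂ with |λ| < 1 and every natural number n, the diagonal matrix coefficients satisfy L(−n, −n) = λ^n and L(n, n) = conj(λ)^n. In particular, (1/(2πi))·∮_{|z|=1} (1/z)·((λ − z)/(1 − conj(λ)·z))^n dz = λ^n. -/

import Mathlib

/-- The matrix coefficient L(n,l) = (1/(2πi))·∮_{|z|=1} z^{l−n−1}·((1 − conj(λ)z)/(λ − z))^n dz
of the transfer operator of the circle map τ_λ(z) = z(λ − z)/(1 − conj(λ)z). -/
noncomputable def transferCoef (lam : ℂ) (n l : ℤ) : ℂ :=
  (1 / (2 * Real.pi * Complex.I)) *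
    ∮ z in C(0, 1), z ^ (l - n - 1) * ((1 - (starRingEnd ℂ) lam * z) / (lam - z)) ^ n

/-!
Against `dz / z` the contour integrals are circle averages. The integrand of `L(-n, -n)` is the
`n`-th power of the Blaschke factor `b_λ(z) = (λ - z) / (1 - conj λ z)`, holomorphic on the closed
disc, so by the mean value property its average is `b_λ(0)ⁿ = λⁿ`. The integrand of `L(n, n)` is
`b_{conj λ}(z⁻¹)ⁿ`, and `z ↦ z⁻¹` preserves circle averages over the unit circle.
-/

open Complex Metric ComplexConjugate Real

noncomputable def blaschkeFactor (μ z : ℂ) : ℂ := (μ - z) / (1 - conj μ * z)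

lemma one_sub_conj_mul_ne_zero {μ z : ℂ} (hμ : ‖μ‖ < 1) (hz : ‖z‖ ≤ 1) :
    1 - conj μ * z ≠ 0 := by
  refine sub_ne_zero.mpr fun h => ?_
  have : ‖conj μ * z‖ < 1 := by
    rw [norm_mul, norm_conj]
    exact lt_of_le_of_lt (mul_le_of_le_one_right (norm_nonneg μ) hz) hμ
  simp [← h] at this

lemma differentiableOn_blaschkeFactor {μ : ℂ} (hμ : ‖μ‖ < 1) :
    DifferentiableOn ℂ (blaschkeFactor μ) (closedBall 0 1) :=
  ((differentiableOn_const μ).sub differentiableOn_id).div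
    ((differentiableOn_const 1).sub ((differentiableOn_const _).mul differentiableOn_id))
    fun z hz => one_sub_conj_mul_ne_zero hμ (by simpa using hz)

lemma blaschkeFactor_conj {μ z : ℂ} (hz : z ≠ 0) :
    blaschkeFactor (conj μ) z = (1 - conj μ * z⁻¹) / (μ - z⁻¹) := by
  rw [blaschkeFactor, conj_conj, ← mul_div_mul_left (1 - _) _ hz, ← neg_div_neg_eq]
  congr 1 <;> field_simp <;> ring

lemma circleAverage_blaschkeFactor_pow {μ : ℂ} (hμ : ‖μ‖ < 1) (n : ℕ) :
    circleAverage (fun z => blaschkeFactor μ z ^ n) 0 1 = μ ^ n := by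
  have hd : DifferentiableOn ℂ (fun z => blaschkeFactor μ z ^ n) (closedBall 0 |1|) := by
    rw [abs_one]
    exact (differentiableOn_blaschkeFactor hμ).pow n
  rw [(hd.mono closure_ball_subset_closedBall).diffContOnCl.circleAverage]
  simp [blaschkeFactor]

lemma one_div_two_pi_I_mul_circleIntegral_inv_mul (g : ℂ → ℂ) :
    1 / (2 * π * I) * (∮ z in C(0, 1), z⁻¹ * g z) = circleAverage g 0 1 := by
  simpa using (circleAverage_eq_circleIntegral (f := g) (c := 0) one_ne_zero).symm

lemma transferCoef_self (lam : ℂ) (m : ℤ) :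
    transferCoef lam m m = circleAverage (fun z => ((1 - conj lam * z) / (lam - z)) ^ m) 0 1 := by
  simp only [transferCoef, sub_self, zero_sub, zpow_neg_one]
  exact one_div_two_pi_I_mul_circleIntegral_inv_mul _

/-- For λ ∈ ℂ with |λ| < 1 and every natural number n, the diagonal coefficients satisfy
L(−n, −n) = λⁿ and L(n, n) = conj(λ)ⁿ; in particular
(1/(2πi))·∮_{|z|=1} (1/z)·((λ − z)/(1 − conj(λ)z))ⁿ dz = λⁿ. -/
theorem transferCoef_diagonal (lam : ℂ) (hlam : ‖lam‖ < 1) (n : ℕ) :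
    transferCoef lam (-(n : ℤ)) (-(n : ℤ)) = lam ^ n ∧
    transferCoef lam (n : ℤ) (n : ℤ) = (starRingEnd ℂ) lam ^ n ∧
    (1 / (2 * Real.pi * Complex.I)) *
        (∮ z in C(0, 1), z⁻¹ * ((lam - z) / (1 - (starRingEnd ℂ) lam * z)) ^ n) = lam ^ n := by
  refine ⟨?_, ?_, ?_⟩
  · simp only [transferCoef_self, zpow_neg, zpow_natCast, ← inv_pow, inv_div]
    exact circleAverage_blaschkeFactor_pow hlam n
  · rw [transferCoef_self, ← circleAverage_blaschkeFactor_pow (norm_conj lam ▸ hlam),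
      ← circleAverage_zero_one_congr_inv]
    refine circleAverage_congr_sphere fun z hz => ?_
    simp [blaschkeFactor_conj (ne_zero_of_mem_sphere (by norm_num) ⟨z, hz⟩)]
  · rw [one_div_two_pi_I_mul_circleIntegral_inv_mul]
    exact circleAverage_blaschkeFactor_pow hlam n
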